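/- arXiv:2411.06880 — 3 statements merged into one kernel-verified Lean document; each statement's English description precedes it below -/
import Mathlib

section
/- For any finite weakly connected digraph G with α source SCCs and β sink SCCs, any set of edges E' such that (V, E ∪ E') is strongly connected satisfies |E'| ≥ max{α, β}. -/
variable {V : Type*}

/-- Directed reachability: reflexive-transitive closure of the edge relation. -/
def Reach (E : V → V → Prop) : V → V → Prop :=
  Relation.ReflTransGen E

/-- Mutual reachability. -/
def Mut (E : V → V → Prop) (u v : V) : Prop :=
  Reach E u v ∧ Reach E v u

/-- A strongly connected component: an equivalence class of mutual reachability. -/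
def IsSCC (E : V → V → Prop) (S : Set V) : Prop :=
  ∃ v, S = {w | Mut E v w}

/-- No edge enters `S` from outside `S`. -/
def NoIn (E : V → V → Prop) (S : Set V) : Prop :=
  ∀ a b, E a b → b ∈ S → a ∈ S

/-- No edge leaves `S`. -/
def NoOut (E : V → V → Prop) (S : Set V) : Prop :=
  ∀ a b, E a b → a ∈ S → b ∈ S

/-- Some edge leaves `S`. -/
def SomeOut (E : V → V → Prop) (S : Set V) : Prop :=
  ∃ a b, E a b ∧ a ∈ S ∧ b ∉ S

/-- Some edge enters `S` from outside. -/
def SomeIn (E : V → V → Prop) (S : Set V) : Prop :=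
  ∃ a b, E a b ∧ a ∉ S ∧ b ∈ S

/-- Weak connectivity: the underlying undirected graph is connected. -/
def WeaklyConn (E : V → V → Prop) : Prop :=
  ∀ u v : V, Relation.ReflTransGen (fun a b => E a b ∨ E b a) u v

/-- The source SCCs: SCCs with some outgoing edge but no incoming edge. -/
def SourceSCCs (E : V → V → Prop) : Set (Set V) :=
  {S | IsSCC E S ∧ NoIn E S ∧ SomeOut E S}

/-- The sink (target) SCCs: SCCs with some incoming edge but no outgoing edge. -/
def SinkSCCs (E : V → V → Prop) : Set (Set V) :=
  {S | IsSCC E S ∧ NoOut E S ∧ SomeIn E S}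

lemma mut_trans' {E : V → V → Prop} {a b c : V} (h1 : Mut E a b) (h2 : Mut E b c) :
    Mut E a c :=
  ⟨h1.1.trans h2.1, h2.2.trans h1.2⟩

lemma scc_eq_of_mem {E : V → V → Prop} {S S' : Set V} (hS : IsSCC E S) (hS' : IsSCC E S')
    {b : V} (hb : b ∈ S) (hb' : b ∈ S') : S = S' := by
  obtain ⟨v, rfl⟩ := hS
  obtain ⟨v', rfl⟩ := hS'
  have hb : Mut E v b := hb
  have hb' : Mut E v' b := hb'
  ext w
  constructor
  · intro hw; exact mut_trans' (mut_trans' hb' ⟨hb.2, hb.1⟩) hw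
  · intro hw; exact mut_trans' (mut_trans' hb ⟨hb'.2, hb'.1⟩) hw

lemma scc_mem_rep {E : V → V → Prop} {S : Set V} (hS : IsSCC E S) : ∃ v, v ∈ S := by
  obtain ⟨v, rfl⟩ := hS
  exact ⟨v, ⟨Relation.ReflTransGen.refl, Relation.ReflTransGen.refl⟩⟩

lemma source_hits {E : V → V → Prop} {E' : Set (V × V)}
    (hstrong : ∀ u v : V,
      Relation.ReflTransGen (fun a b => E a b ∨ (a, b) ∈ E') u v)
    {S : Set V} (hS : S ∈ SourceSCCs E) : ∃ e ∈ E', e.2 ∈ S := by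
  obtain ⟨hSCC, hNoIn, a, b, hab, haS, hbS⟩ := hS
  obtain ⟨v, hv⟩ := scc_mem_rep hSCC
  have h := hstrong b v
  have key : ∀ x, Relation.ReflTransGen (fun a b => E a b ∨ (a, b) ∈ E') x v →
      x ∈ S ∨ ∃ e ∈ E', e.2 ∈ S := by
    intro x hx
    induction hx using Relation.ReflTransGen.head_induction_on with
    | refl => exact Or.inl hv
    | head h' _ ih =>
      rename_i p q hq'
      rcases ih with hq | he
      · rcases h' with h' | h'
        · exact Or.inl (hNoIn _ _ h' hq)
        · exact Or.inr ⟨(p, q), h', hq⟩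
      · exact Or.inr he
  rcases key b h with hb | he
  · exact absurd hb hbS
  · exact he

lemma sink_hits {E : V → V → Prop} {E' : Set (V × V)}
    (hstrong : ∀ u v : V,
      Relation.ReflTransGen (fun a b => E a b ∨ (a, b) ∈ E') u v)
    {S : Set V} (hS : S ∈ SinkSCCs E) : ∃ e ∈ E', e.1 ∈ S := by
  obtain ⟨hSCC, hNoOut, a, b, hab, haS, hbS⟩ := hS
  obtain ⟨v, hv⟩ := scc_mem_rep hSCC
  have h := hstrong v a
  have key : ∀ x, Relation.ReflTransGen (fun a b => E a b ∨ (a, b) ∈ E') x a →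
      x ∈ S → ∃ e ∈ E', e.1 ∈ S := by
    intro x hx
    induction hx using Relation.ReflTransGen.head_induction_on with
    | refl => exact fun hx => absurd hx haS
    | head h' _ ih =>
      rename_i p q hq'
      intro hp
      rcases h' with h' | h'
      · exact ih (hNoOut _ _ h' hp)
      · exact ⟨(p, q), h', hp⟩
  exact key v h hv

/-- any augmenting edge set making G strongly connected has at least
max{α, β} edges. -/
theorem stmt_9 [Fintype V] (E : V → V → Prop)
    (hW : WeaklyConn E)
    (hNS : ¬ ∀ u v : V, u ≠ v → Reach E u v ∧ Reach E v u)
    (α β : ℕ)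
    (hα : α = (SourceSCCs E).ncard) (hβ : β = (SinkSCCs E).ncard)
    (E' : Set (V × V))
    (hstrong : ∀ u v : V,
      Relation.ReflTransGen (fun a b => E a b ∨ (a, b) ∈ E') u v) :
    max α β ≤ E'.ncard := by
  classical
  have hfin : E'.Finite := Set.toFinite _
  rcases isEmpty_or_nonempty V with hV | hV
  · have h1 : SourceSCCs E = ∅ := by
      ext S
      simp only [Set.mem_empty_iff_false, iff_false]
      rintro ⟨⟨v, _⟩, _⟩
      exact hV.elim v
    have h2 : SinkSCCs E = ∅ := by
      ext S
      simp only [Set.mem_empty_iff_false, iff_false]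
      rintro ⟨⟨v, _⟩, _⟩
      exact hV.elim v
    simp [hα, hβ, h1, h2]
  · have hI : Inhabited (V × V) := ⟨(Classical.arbitrary V, Classical.arbitrary V)⟩
    have hsrc : α ≤ E'.ncard := by
      subst hα
      set f : Set V → V × V := fun S =>
        if h : ∃ e ∈ E', e.2 ∈ S then h.choose else default with hf
      refine Set.ncard_le_ncard_of_injOn f ?_ ?_ hfin
      · intro S hS
        have h := source_hits hstrong hS
        simp only [hf, dif_pos h]
        exact h.choose_spec.1
      · intro S hS S' hS' heq
        have h := source_hits hstrong hS
        have h' := source_hits hstrong hS'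
        have e2 : (f S).2 ∈ S := by simp only [hf, dif_pos h]; exact h.choose_spec.2
        have e2' : (f S').2 ∈ S' := by simp only [hf, dif_pos h']; exact h'.choose_spec.2
        rw [heq] at e2
        exact scc_eq_of_mem hS.1 hS'.1 e2 e2'
    have hsink : β ≤ E'.ncard := by
      subst hβ
      set g : Set V → V × V := fun S =>
        if h : ∃ e ∈ E', e.1 ∈ S then h.choose else default with hg
      refine Set.ncard_le_ncard_of_injOn g ?_ ?_ hfin
      · intro S hS
        have h := sink_hits hstrong hS
        simp only [hg, dif_pos h]
        exact h.choose_spec.1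
      · intro S hS S' hS' heq
        have h := sink_hits hstrong hS
        have h' := sink_hits hstrong hS'
        have e1 : (g S).1 ∈ S := by simp only [hg, dif_pos h]; exact h.choose_spec.2
        have e1' : (g S').1 ∈ S' := by simp only [hg, dif_pos h']; exact h'.choose_spec.2
        rw [heq] at e1
        exact scc_eq_of_mem hS.1 hS'.1 e1 e1'
    exact max_le hsrc hsink
end

section
/- Let G be a weakly connected digraph with exactly one source SCC S₀ and sink SCCs T₁, …, T_β (β ≥ 1). Pick s ∈ S₀ and t_i ∈ T_i for each i. Then adding the edges (t₁, s), …, (t_β, s) makes the digraph strongly connected. -/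
variable {V : Type*}

lemma exists_sink_vtx_aux [Fintype V] (E : V → V → Prop) :
    ∀ n (u : V), ({w | Reach E u w}).ncard ≤ n →
    ∃ u', Reach E u u' ∧ ∀ w, Reach E u' w → Reach E w u' := by
  classical
  intro n
  induction n with
  | zero =>
    intro u h
    exfalso
    have hmem : u ∈ {w | Reach E u w} := Relation.ReflTransGen.refl
    have := Set.ncard_pos (Set.toFinite _) |>.mpr ⟨u, hmem⟩
    omega
  | succ n ih =>
    intro u h
    by_cases hu : ∀ w, Reach E u w → Reach E w u
    · exact ⟨u, Relation.ReflTransGen.refl, hu⟩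
    · push_neg at hu
      obtain ⟨w, hw, hwn⟩ := hu
      have hsub : {x | Reach E w x} ⊆ {x | Reach E u x} := fun x hx => hw.trans hx
      have hss : {x | Reach E w x} ⊂ {x | Reach E u x} := by
        refine ⟨hsub, fun hsub' => ?_⟩
        exact hwn (hsub' (Relation.ReflTransGen.refl : u ∈ {x | Reach E u x}))
      have hcard := Set.ncard_lt_ncard hss (Set.toFinite _)
      obtain ⟨u', h1, h2⟩ := ih w (by omega)
      exact ⟨u', hw.trans h1, h2⟩

lemma exists_sink_vtx [Fintype V] (E : V → V → Prop) (u : V) :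
    ∃ u', Reach E u u' ∧ ∀ w, Reach E u' w → Reach E w u' :=
  exists_sink_vtx_aux E _ u le_rfl

lemma exists_source_vtx [Fintype V] (E : V → V → Prop) (u : V) :
    ∃ u', Reach E u' u ∧ ∀ w, Reach E w u' → Reach E u' w := by
  obtain ⟨u', h1, h2⟩ := exists_sink_vtx (fun a b => E b a) u
  have key : ∀ a b : V, Reach (fun a b => E b a) a b ↔ Reach E b a := by
    intro a b
    constructor
    · intro h; induction h with
      | refl => exact Relation.ReflTransGen.refl
      | tail _ he ih => exact Relation.ReflTransGen.head he ih
    · intro h; induction h with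
      | refl => exact Relation.ReflTransGen.refl
      | tail ih he ihh => exact Relation.ReflTransGen.head he ihh
  exact ⟨u', (key u u').mp h1, fun w hw => (key w u').mp (h2 w ((key u' w).mpr hw))⟩

/-- with exactly one source SCC, adding an edge from one vertex of each
sink SCC to a fixed vertex of the source SCC makes the digraph strongly connected. -/
theorem stmt_10 [Fintype V] (E : V → V → Prop)
    (hW : WeaklyConn E)
    (hNS : ¬ ∀ u v : V, Reach E u v)
    (S0 : Set V) (hS0 : IsSCC E S0 ∧ NoIn E S0)
    (huniq : ∀ S : Set V, IsSCC E S ∧ NoIn E S → S = S0)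
    (β : ℕ) (hβ : 1 ≤ β)
    (T : Fin β → Set V) (hT : ∀ i, IsSCC E (T i) ∧ NoOut E (T i))
    (hTinj : Function.Injective T)
    (hTall : ∀ S : Set V, IsSCC E S ∧ NoOut E S → ∃ i, S = T i)
    (s : V) (hs : s ∈ S0) (t : Fin β → V) (ht : ∀ i, t i ∈ T i) :
    ∀ u v : V, Reach (fun a b => E a b ∨ ∃ i, a = t i ∧ b = s) u v := by
  classical
  -- every vertex is reachable from s in E
  have hfrom_s : ∀ u : V, Reach E s u := by
    intro u
    obtain ⟨u', h1, h2⟩ := exists_source_vtx E u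
    have hscc : IsSCC E {w | Mut E u' w} := ⟨u', rfl⟩
    have hnoin : NoIn E {w | Mut E u' w} := by
      intro a b hab hb
      have hau' : Reach E a u' :=
        (Relation.ReflTransGen.single hab).trans hb.2
      exact ⟨h2 a hau', hau'⟩
    have heq := huniq _ ⟨hscc, hnoin⟩
    have hsu' : Mut E u' s := by have h := hs; rw [← heq] at h; exact h
    exact hsu'.2.trans h1
  -- every vertex reaches some t i in E
  have hto_t : ∀ u : V, ∃ i, Reach E u (t i) := by
    intro u
    obtain ⟨u', h1, h2⟩ := exists_sink_vtx E u
    have hscc : IsSCC E {w | Mut E u' w} := ⟨u', rfl⟩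
    have hnoout : NoOut E {w | Mut E u' w} := by
      intro a b hab ha
      have hu'b : Reach E u' b := ha.1.trans (Relation.ReflTransGen.single hab)
      exact ⟨hu'b, h2 b hu'b⟩
    obtain ⟨i, hi⟩ := hTall _ ⟨hscc, hnoout⟩
    have : t i ∈ {w | Mut E u' w} := hi ▸ ht i
    exact ⟨i, h1.trans this.1⟩
  -- E reach lifts to E' reach
  have hmono : ∀ u v : V, Reach E u v →
      Reach (fun a b => E a b ∨ ∃ i, a = t i ∧ b = s) u v := by
    intro u v h
    induction h with
    | refl => exact Relation.ReflTransGen.refl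
    | tail _ he ih => exact ih.tail (Or.inl he)
  intro u v
  obtain ⟨i, hi⟩ := hto_t u
  refine ((hmono _ _ hi).tail (Or.inr ⟨i, rfl, rfl⟩)).trans (hmono _ _ (hfrom_s v))
end

section
/- Let G be a weakly connected digraph with α > 1 source SCCs and β > 1 sink SCCs, and let e = (t, s) be a tight edge (s in a source SCC, t in a sink SCC, there exists s' in a different source SCC with s' ⇝ t, and there exists t' in a different sink SCC with s ⇝ t'). Then G + e has exactly α − 1 source SCCs and exactly β − 1 sink SCCs. -/
/-!
Adding the edge `t → s` only merges SCCs along paths through `s`, so every SCC `C` with no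
incoming edge and `s ∉ C` keeps both its vertex set and that property. The source SCC of `s`
stops being a source, as `t` now enters it. No new source appears: a source `C` of the new graph
containing `s` would contain `t`, hence the vertex `s'` of another old source with `s' ⇝ t`, and
then `s ⇝ s'` would put `s` in the source of `s'`. Nor can the old sink of `t` become a source,
since it still has its old incoming edge. Reversing all edges exchanges sources and sinks, which
gives the statement about sinks from the tight vertex `t'`.
-/

variable {V : Type*}

def addEdge (E : V → V → Prop) (a b : V) : V → V → Prop :=
  fun x y => E x y ∨ (x = a ∧ y = b)

section

variable {E : V → V → Prop} {S T C : Set V} {s t u v w : V}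

theorem Mut.refl (E : V → V → Prop) (v : V) : Mut E v v :=
  ⟨.refl, .refl⟩

theorem Mut.symm (h : Mut E u v) : Mut E v u :=
  ⟨h.2, h.1⟩

theorem Mut.trans (h : Mut E u v) (h' : Mut E v w) : Mut E u w :=
  ⟨h.1.trans h'.1, h'.2.trans h.2⟩

theorem IsSCC.eq_setOf_mut (hC : IsSCC E C) (hu : u ∈ C) : C = {w | Mut E u w} := by
  obtain ⟨v, rfl⟩ := hC
  ext w
  exact ⟨hu.symm.trans, hu.trans⟩

theorem IsSCC.mut_of_mem (hC : IsSCC E C) (hu : u ∈ C) (hv : v ∈ C) : Mut E u v := by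
  rw [hC.eq_setOf_mut hu] at hv
  exact hv

theorem IsSCC.eq_of_mem (hS : IsSCC E S) (hT : IsSCC E T) (huS : u ∈ S) (huT : u ∈ T) :
    S = T :=
  (hS.eq_setOf_mut huS).trans (hT.eq_setOf_mut huT).symm

theorem NoIn.mem_of_reach (hC : NoIn E C) (h : Reach E u v) (hv : v ∈ C) : u ∈ C := by
  induction h with
  | refl => exact hv
  | tail _ hbc ih => exact ih (hC _ _ hbc hv)

theorem reach_addEdge_iff :
    Reach (addEdge E t s) u v ↔ Reach E u v ∨ (Reach E u t ∧ Reach E s v) := by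
  constructor
  · intro h
    induction h with
    | refl => exact .inl .refl
    | tail _ hbc ih =>
      rcases hbc with hbc | ⟨rfl, rfl⟩
      · exact ih.imp (·.tail hbc) (And.imp_right (·.tail hbc))
      · exact .inr ⟨ih.elim id And.left, .refl⟩
  · have hmono : Reach E ≤ Reach (addEdge E t s) :=
      Relation.ReflTransGen.mono fun _ _ => .inl
    rintro (h | ⟨hut, hsv⟩)
    · exact hmono u v h
    · exact ((hmono u t hut).tail (.inr ⟨rfl, rfl⟩)).trans (hmono s v hsv)

theorem reach_addEdge_of_reach (h : Reach E u v) : Reach (addEdge E t s) u v :=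
  reach_addEdge_iff.2 (.inl h)

theorem reach_addEdge_from_target_iff : Reach (addEdge E t s) s v ↔ Reach E s v :=
  ⟨fun h => (reach_addEdge_iff.1 h).elim id And.right, reach_addEdge_of_reach⟩

theorem setOf_mut_addEdge (hC : NoIn E C) (hsC : s ∉ C) (hv : v ∈ C) :
    {w | Mut (addEdge E t s) v w} = {w | Mut E v w} := by
  ext w
  constructor
  · rintro ⟨hvw, hwv⟩
    rw [reach_addEdge_iff] at hvw hwv
    have hwv : Reach E w v := hwv.resolve_right fun h => hsC (hC.mem_of_reach h.2 hv)
    exact ⟨hvw.resolve_right fun h => hsC (hC.mem_of_reach (h.2.trans hwv) hv), hwv⟩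
  · exact fun h => ⟨reach_addEdge_of_reach h.1, reach_addEdge_of_reach h.2⟩

theorem isSCC_addEdge_iff (hC : NoIn E C) (hsC : s ∉ C) :
    IsSCC (addEdge E t s) C ↔ IsSCC E C := by
  constructor <;> rintro ⟨v, rfl⟩
  · exact ⟨v, setOf_mut_addEdge hC hsC (Mut.refl _ v)⟩
  · exact ⟨v, (setOf_mut_addEdge hC hsC (Mut.refl E v)).symm⟩

theorem sourceSCCs_addEdge (hS : IsSCC E S) (hsS : s ∈ S) (hT : T ∈ SinkSCCs E) (htT : t ∈ T)
    (hs' : ∃ s', (∃ S' ∈ SourceSCCs E, s' ∈ S') ∧ ¬ Mut E s' s ∧ Reach E s' t) :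
    SourceSCCs (addEdge E t s) = SourceSCCs E \ {S} := by
  ext C
  constructor
  · rintro ⟨hC, hCin, hCout⟩
    have hCinE : NoIn E C := fun a b hab => hCin a b (.inl hab)
    have hsC : s ∉ C := by
      obtain ⟨s', ⟨S', hS', hs'S'⟩, hs's, hs't⟩ := hs'
      intro hsC
      have htC : t ∈ C := hCin t s (.inr ⟨rfl, rfl⟩) hsC
      have hs'C : s' ∈ C := hCin.mem_of_reach (reach_addEdge_of_reach hs't) htC
      have hss' : Reach E s s' := reach_addEdge_from_target_iff.1 (hC.mut_of_mem hsC hs'C).1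
      exact hs's (hS'.1.mut_of_mem hs'S' (hS'.2.1.mem_of_reach hss' hs'S'))
    have hCE : IsSCC E C := (isSCC_addEdge_iff hCinE hsC).1 hC
    have htC : t ∉ C := by
      intro htC
      obtain ⟨a, b, hab, haT, hbT⟩ := hT.2.2
      rw [← hCE.eq_of_mem hT.1 htC htT] at haT hbT
      exact haT (hCinE a b hab hbT)
    refine ⟨⟨hCE, hCinE, ?_⟩, fun hCS => hsC (hCS ▸ hsS)⟩
    obtain ⟨a, b, hab | ⟨rfl, -⟩, haC, hbC⟩ := hCout
    · exact ⟨a, b, hab, haC, hbC⟩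
    · exact absurd haC htC
  · rintro ⟨⟨hC, hCin, a, b, hab, haC, hbC⟩, hCS⟩
    have hsC : s ∉ C := fun hsC => hCS (hC.eq_of_mem hS hsC hsS)
    refine ⟨(isSCC_addEdge_iff hCin hsC).2 hC, ?_, a, b, .inl hab, haC, hbC⟩
    rintro a b (hab | ⟨-, rfl⟩) hbC
    · exact hCin a b hab hbC
    · exact absurd hbC hsC

theorem reach_flip : Reach (flip E) u v ↔ Reach E v u :=
  Relation.reflTransGen_swap

theorem mut_flip : Mut (flip E) u v ↔ Mut E u v := by
  rw [Mut, Mut, reach_flip, reach_flip, and_comm]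

theorem isSCC_flip : IsSCC (flip E) C ↔ IsSCC E C := by
  simp only [IsSCC, mut_flip]

theorem sourceSCCs_flip (E : V → V → Prop) : SourceSCCs (flip E) = SinkSCCs E := by
  ext C
  refine and_congr isSCC_flip (and_congr ?_ ?_)
  · exact ⟨fun h a b hab => h b a hab, fun h a b hab => h b a hab⟩
  · exact ⟨fun ⟨a, b, hab, ha, hb⟩ => ⟨b, a, hab, hb, ha⟩,
      fun ⟨a, b, hab, ha, hb⟩ => ⟨b, a, hab, hb, ha⟩⟩

theorem sinkSCCs_flip (E : V → V → Prop) : SinkSCCs (flip E) = SourceSCCs E :=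
  (sourceSCCs_flip (flip E)).symm

theorem flip_addEdge (E : V → V → Prop) (a b : V) :
    flip (addEdge E a b) = addEdge (flip E) b a := by
  funext x y
  simp only [flip, addEdge, and_comm]

end

theorem stmt_12_general (E : V → V → Prop)
    (α β : ℕ)
    (hα : α = (SourceSCCs E).ncard) (hβ : β = (SinkSCCs E).ncard)
    (s t : V)
    (hs : ∃ S ∈ SourceSCCs E, s ∈ S)
    (ht : ∃ T ∈ SinkSCCs E, t ∈ T)
    (hs' : ∃ s' : V, (∃ S' ∈ SourceSCCs E, s' ∈ S') ∧ ¬ Mut E s' s ∧ Reach E s' t)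
    (ht' : ∃ t' : V, (∃ T' ∈ SinkSCCs E, t' ∈ T') ∧ ¬ Mut E t' t ∧ Reach E s t') :
    (SourceSCCs (fun a b => E a b ∨ (a = t ∧ b = s))).ncard = α - 1 ∧
    (SinkSCCs (fun a b => E a b ∨ (a = t ∧ b = s))).ncard = β - 1 := by
  obtain ⟨S, hS, hsS⟩ := hs
  obtain ⟨T, hT, htT⟩ := ht
  have hsink : SinkSCCs (addEdge E t s) = SinkSCCs E \ {T} := by
    rw [← sourceSCCs_flip, flip_addEdge, ← sourceSCCs_flip]
    refine sourceSCCs_addEdge (isSCC_flip.2 hT.1) htT (sinkSCCs_flip E ▸ hS) hsS ?_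
    obtain ⟨t', ⟨T', hT', ht'T'⟩, ht't, hst'⟩ := ht'
    exact ⟨t', ⟨T', sourceSCCs_flip E ▸ hT', ht'T'⟩, mt mut_flip.1 ht't, reach_flip.2 hst'⟩
  show (SourceSCCs (addEdge E t s)).ncard = α - 1 ∧ (SinkSCCs (addEdge E t s)).ncard = β - 1
  rw [sourceSCCs_addEdge hS.1 hsS hT htT hs', hsink, Set.ncard_sdiff_singleton_of_mem hS,
    Set.ncard_sdiff_singleton_of_mem hT, hα, hβ]
  exact ⟨rfl, rfl⟩

/-- adding a tight edge (t,s) when α > 1 and β > 1 decreases both the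
number of source SCCs and the number of sink SCCs by exactly one. -/
theorem stmt_12 [Fintype V] (E : V → V → Prop)
    (hW : WeaklyConn E)
    (α β : ℕ)
    (hα : α = (SourceSCCs E).ncard) (hβ : β = (SinkSCCs E).ncard)
    (hα1 : 1 < α) (hβ1 : 1 < β)
    (s t : V)
    (hs : ∃ S ∈ SourceSCCs E, s ∈ S)
    (ht : ∃ T ∈ SinkSCCs E, t ∈ T)
    (hs' : ∃ s' : V, (∃ S' ∈ SourceSCCs E, s' ∈ S') ∧ ¬ Mut E s' s ∧ Reach E s' t)
    (ht' : ∃ t' : V, (∃ T' ∈ SinkSCCs E, t' ∈ T') ∧ ¬ Mut E t' t ∧ Reach E s t') :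
    (SourceSCCs (fun a b => E a b ∨ (a = t ∧ b = s))).ncard = α - 1 ∧
    (SinkSCCs (fun a b => E a b ∨ (a = t ∧ b = s))).ncard = β - 1 :=
  stmt_12_general E α β hα hβ s t hs ht hs' ht'
end
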